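/- Let R = 𝔽₁ × ⋯ × 𝔽_t be a finite product of finite fields, and let A ∈ Mat_{δ×δ}(R), B ∈ Mat_{δ×k}(R), C ∈ Mat_{(n−k)×δ}(R), D ∈ Mat_{(n−k)×k}(R) be matrices such that the controllability matrix Φ_δ(A,B) = (B, AB, …, A^{δ−1}B) is surjective and the observability matrix Ω_δ(A,C) (the (δ(n−k))×δ matrix with block rows C, CA, …, CA^{δ−1}) is injective. Define 𝔠 := {v(z) = (y(z), u(z)) ∈ R[z]^{n−k} × R[z]^k : ∃ x(z) ∈ R[z]^δ with z·x(z) = A x(z) + B u(z) and y(z) = C x(z) + D u(z)} ⊆ R[z]^n. Then R[z]^n/𝔠 is flat as an R[z]-module, i.e. the family of convolutional codes 𝔠 defined by the input/state/output representation (A,B,C,D) is observable. -/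

import Mathlib

/-!
Over a field `𝔽`, if `q • v` lies in the code with state `x`, then modulo `q` the state `x` is a
trajectory with zero input and zero output, so it lies in the kernel of `Ω_δ(A,C)`; since that
matrix has a left inverse, `q` divides `x`, and cancelling `q` shows `v` lies in the code. Hence
`𝔽[z]^n/𝔠` is torsion-free, and so flat over the Dedekind domain `𝔽[z]`.

For `R = 𝔽₁ × ⋯ × 𝔽_t`, the ring `R[z]` is `𝔽₁[z] × ⋯ × 𝔽_t[z]`, each factor being the
localization of `R[z]` at an idempotent, hence flat over `R[z]`; and `R[z]^n/𝔠` is the product of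
the component quotients. Because `R` is semisimple, `Ω_δ(A,C)` has a left inverse over `R`, which
maps to a left inverse over every component.
-/

open Matrix Polynomial

/-- The controllability matrix `Φ_δ(A,B) = (B, AB, …, A^{δ-1}B)`. -/
def ctrbMatrix {S : Type*} [CommRing S] {δ k : ℕ}
    (A : Matrix (Fin δ) (Fin δ) S) (B : Matrix (Fin δ) (Fin k) S) :
    Matrix (Fin δ) (Fin δ × Fin k) S :=
  Matrix.of fun i p => (A ^ (p.1 : ℕ) * B) i p.2

/-- The observability matrix `Ω_δ(A,C)`, with block rows `C, CA, …, CA^{δ-1}`. -/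
def obsvMatrix {S : Type*} [CommRing S] {δ m : ℕ}
    (A : Matrix (Fin δ) (Fin δ) S) (C : Matrix (Fin m) (Fin δ) S) :
    Matrix (Fin δ × Fin m) (Fin δ) S :=
  Matrix.of fun p q => (C * A ^ (p.1 : ℕ)) p.2 q

theorem obsvMatrix_map {S T : Type*} [CommRing S] [CommRing T] {δ m : ℕ} (f : S →+* T)
    (A : Matrix (Fin δ) (Fin δ) S) (C : Matrix (Fin m) (Fin δ) S) :
    obsvMatrix (A.map f) (C.map f) = (obsvMatrix A C).map f := by
  ext p q
  rw [obsvMatrix, obsvMatrix, of_apply, map_apply, of_apply, ← RingHom.mapMatrix_apply,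
    ← map_pow, RingHom.mapMatrix_apply, ← Matrix.map_mul, map_apply]

section Trajectory

variable {T T' : Type*} [CommRing T] [CommRing T'] {δ k m : ℕ}

/-- The codes of the theorem take `z = X` over `R[X]`; keeping `z` a general scalar lets
trajectories be reduced modulo an element and projected to the factors of a product ring. -/
def IsTrajectory (z : T) (A : Matrix (Fin δ) (Fin δ) T) (B : Matrix (Fin δ) (Fin k) T)
    (C : Matrix (Fin m) (Fin δ) T) (D : Matrix (Fin m) (Fin k) T)
    (x : Fin δ → T) (u : Fin k → T) (y : Fin m → T) : Prop :=
  z • x = A *ᵥ x + B *ᵥ u ∧ y = C *ᵥ x + D *ᵥ u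

variable {z : T} {A : Matrix (Fin δ) (Fin δ) T} {B : Matrix (Fin δ) (Fin k) T}
  {C : Matrix (Fin m) (Fin δ) T} {D : Matrix (Fin m) (Fin k) T}
  {x : Fin δ → T} {u : Fin k → T} {y : Fin m → T}

theorem IsTrajectory.zero : IsTrajectory z A B C D 0 0 0 := by
  simp [IsTrajectory]

theorem IsTrajectory.add {x' : Fin δ → T} {u' : Fin k → T} {y' : Fin m → T}
    (h : IsTrajectory z A B C D x u y) (h' : IsTrajectory z A B C D x' u' y') :
    IsTrajectory z A B C D (x + x') (u + u') (y + y') := by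
  obtain ⟨h1, h2⟩ := h
  obtain ⟨h1', h2'⟩ := h'
  constructor
  · rw [smul_add, h1, h1', mulVec_add, mulVec_add]; abel
  · rw [h2, h2', mulVec_add, mulVec_add]; abel

theorem IsTrajectory.smul (h : IsTrajectory z A B C D x u y) (c : T) :
    IsTrajectory z A B C D (c • x) (c • u) (c • y) := by
  obtain ⟨h1, h2⟩ := h
  constructor
  · rw [smul_comm, h1, mulVec_smul, mulVec_smul, smul_add]
  · rw [h2, mulVec_smul, mulVec_smul, smul_add]

theorem IsTrajectory.of_smul {c : T} (hc : IsRegular c)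
    (h : IsTrajectory z A B C D (c • x) (c • u) (c • y)) : IsTrajectory z A B C D x u y := by
  obtain ⟨h1, h2⟩ := h
  constructor
  · refine funext fun i => hc.left ?_
    simpa [mulVec_smul, mul_add, mul_left_comm c z] using congrFun h1 i
  · refine funext fun i => hc.left ?_
    simpa [mulVec_smul, mul_add] using congrFun h2 i

theorem IsTrajectory.map (f : T →+* T') (h : IsTrajectory z A B C D x u y) :
    IsTrajectory (f z) (A.map f) (B.map f) (C.map f) (D.map f) (f ∘ x) (f ∘ u) (f ∘ y) := by
  obtain ⟨h1, h2⟩ := h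
  constructor
  · funext i
    simpa [RingHom.map_mulVec] using congrArg f (congrFun h1 i)
  · funext i
    simpa [RingHom.map_mulVec] using congrArg f (congrFun h2 i)

theorem IsTrajectory.of_map {ι : Type*} {S : ι → Type*} [∀ i, CommRing (S i)]
    (f : ∀ i, T →+* S i) (hf : Function.Injective (RingHom.pi f))
    (h : ∀ i, IsTrajectory (f i z) (A.map (f i)) (B.map (f i)) (C.map (f i)) (D.map (f i))
      (f i ∘ x) (f i ∘ u) (f i ∘ y)) :
    IsTrajectory z A B C D x u y := by
  constructor
  · funext c
    refine hf (funext fun i => ?_)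
    change f i _ = f i _
    simpa [RingHom.map_mulVec] using congrFun (h i).1 c
  · funext c
    refine hf (funext fun i => ?_)
    change f i _ = f i _
    simpa [RingHom.map_mulVec] using congrFun (h i).2 c

theorem IsTrajectory.obsvMatrix_mulVec_eq_zero (h : IsTrajectory z A B C D x 0 0) :
    obsvMatrix A C *ᵥ x = 0 := by
  obtain ⟨h1, h2⟩ := h
  rw [mulVec_zero, add_zero] at h1 h2
  have hpow : ∀ l : ℕ, A ^ l *ᵥ x = z ^ l • x := by
    intro l
    induction l with
    | zero => simp
    | succ l ih =>
      rw [pow_succ', ← mulVec_mulVec, ih, mulVec_smul, ← h1, pow_succ', mul_smul, smul_comm]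
  funext p
  change ((C * A ^ (p.1 : ℕ)) *ᵥ x) p.2 = 0
  rw [← mulVec_mulVec, hpow, mulVec_smul, ← h2, smul_zero]
  rfl

end Trajectory

section Code

variable {T : Type*} [CommRing T] {δ k m : ℕ}

def isoCode (z : T) (A : Matrix (Fin δ) (Fin δ) T) (B : Matrix (Fin δ) (Fin k) T)
    (C : Matrix (Fin m) (Fin δ) T) (D : Matrix (Fin m) (Fin k) T) :
    Submodule T (Fin m ⊕ Fin k → T) where
  carrier := {v | ∃ x, IsTrajectory z A B C D x (fun i => v (Sum.inr i)) (fun i => v (Sum.inl i))}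
  add_mem' := fun ⟨x, hx⟩ ⟨x', hx'⟩ => ⟨x + x', hx.add hx'⟩
  zero_mem' := ⟨0, .zero⟩
  smul_mem' c _ := fun ⟨x, hx⟩ => ⟨c • x, hx.smul c⟩

variable {z : T} {A : Matrix (Fin δ) (Fin δ) T} {B : Matrix (Fin δ) (Fin k) T}
  {C : Matrix (Fin m) (Fin δ) T} {D : Matrix (Fin m) (Fin k) T}

theorem mem_isoCode_of_smul_mem {L : Matrix (Fin δ) (Fin δ × Fin m) T}
    (hL : L * obsvMatrix A C = 1) {q : T} (hq : IsRegular q) {v : Fin m ⊕ Fin k → T}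
    (hv : q • v ∈ isoCode z A B C D) : v ∈ isoCode z A B C D := by
  obtain ⟨x, hx⟩ := hv
  let π := Ideal.Quotient.mk (Ideal.span {q})
  have hπq : π q = 0 := Ideal.Quotient.eq_zero_iff_mem.mpr (Ideal.mem_span_singleton_self q)
  have hπx : π ∘ x = 0 := by
    have hinput : (π ∘ fun i => (q • v) (Sum.inr i)) = 0 := funext fun i => by simp [hπq]
    have houtput : (π ∘ fun i => (q • v) (Sum.inl i)) = 0 := funext fun i => by simp [hπq]
    have hx0 := hx.map π
    rw [hinput, houtput] at hx0
    have hΩx := hx0.obsvMatrix_mulVec_eq_zero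
    rw [obsvMatrix_map] at hΩx
    calc π ∘ x = (L.map π * (obsvMatrix A C).map π) *ᵥ (π ∘ x) := by
          rw [← Matrix.map_mul, hL, Matrix.map_one _ (map_zero π) (map_one π), one_mulVec]
      _ = 0 := by rw [← mulVec_mulVec, hΩx, mulVec_zero]
  have hqx : ∀ c, q ∣ x c := fun c =>
    Ideal.mem_span_singleton.mp (Ideal.Quotient.eq_zero_iff_mem.mp (congrFun hπx c))
  choose x' hx' using hqx
  refine ⟨x', IsTrajectory.of_smul hq ?_⟩
  rwa [show q • x' = x from (funext hx').symm]

end Code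

theorem Matrix.exists_mul_eq_one_of_injective {S : Type*} [CommRing S] [IsSemisimpleRing S]
    {m n : Type*} [Fintype m] [Fintype n] [DecidableEq n] {M : Matrix m n S}
    (hM : Function.Injective M.mulVecLin) : ∃ L : Matrix n m S, L * M = 1 := by
  classical
  obtain ⟨g, hg⟩ := IsSemisimpleModule.extension_property _ hM LinearMap.id
  refine ⟨LinearMap.toMatrix' g, ?_⟩
  have h := congrArg LinearMap.toMatrix' hg
  rwa [LinearMap.toMatrix'_comp, ← Matrix.toLin'_apply', LinearMap.toMatrix'_toLin',
    LinearMap.toMatrix'_id] at h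

theorem isTorsionFree_quotient_isoCode {T : Type*} [CommRing T] {δ k m : ℕ} {z : T}
    {A : Matrix (Fin δ) (Fin δ) T} {B : Matrix (Fin δ) (Fin k) T}
    {C : Matrix (Fin m) (Fin δ) T} {D : Matrix (Fin m) (Fin k) T}
    {L : Matrix (Fin δ) (Fin δ × Fin m) T} (hL : L * obsvMatrix A C = 1) :
    Module.IsTorsionFree T ((Fin m ⊕ Fin k → T) ⧸ isoCode z A B C D) where
  isSMulRegular q hq a b h := by
    obtain ⟨v, rfl⟩ := Submodule.Quotient.mk_surjective _ a
    obtain ⟨w, rfl⟩ := Submodule.Quotient.mk_surjective _ b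
    change q • Submodule.Quotient.mk v = q • Submodule.Quotient.mk w at h
    rw [← Submodule.Quotient.mk_smul, ← Submodule.Quotient.mk_smul, Submodule.Quotient.eq,
      ← smul_sub] at h
    exact (Submodule.Quotient.eq _).mpr (mem_isoCode_of_smul_mem hL hq h)

theorem flat_quotient_isoCode_of_mul_obsvMatrix_eq_one {T : Type*} [CommRing T]
    [IsDedekindDomain T] {δ k m : ℕ} {z : T} {A : Matrix (Fin δ) (Fin δ) T}
    {B : Matrix (Fin δ) (Fin k) T} {C : Matrix (Fin m) (Fin δ) T} {D : Matrix (Fin m) (Fin k) T}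
    {L : Matrix (Fin δ) (Fin δ × Fin m) T} (hL : L * obsvMatrix A C = 1) :
    Module.Flat T ((Fin m ⊕ Fin k → T) ⧸ isoCode z A B C D) := by
  have : Module.IsTorsionFree T ((Fin m ⊕ Fin k → T) ⧸ isoCode z A B C D) :=
    isTorsionFree_quotient_isoCode hL
  infer_instance

theorem Module.Flat.pi {R ι : Type*} [CommRing R] [Finite ι] {M : ι → Type*}
    [∀ i, AddCommGroup (M i)] [∀ i, Module R (M i)] [∀ i, Module.Flat R (M i)] :
    Module.Flat R (∀ i, M i) := by
  classical
  cases nonempty_fintype ι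
  exact of_linearEquiv (DirectSum.linearEquivFunOnFintype R ι M).symm

section Pi

variable {T ι : Type*} [CommRing T] {T' : ι → Type*} [∀ i, CommRing (T' i)]

theorem flat_of_bijective_pi_algebraMap [∀ i, Algebra T (T' i)]
    (hT : Function.Bijective (RingHom.pi fun i => algebraMap T (T' i))) (i : ι) :
    Module.Flat T (T' i) := by
  classical
  let e := RingEquiv.ofBijective _ hT
  have he : ∀ a, e a = fun j => algebraMap T (T' j) a := fun _ => rfl
  have hidem : IsIdempotentElem (Pi.single i 1 : ∀ j, T' j) := by
    rw [IsIdempotentElem, ← Pi.single_mul, mul_one]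
  have : IsLocalization.Away (e.symm (Pi.single i 1)) (T' i) := by
    refine IsLocalization.away_of_isIdempotentElem_of_mul (hidem.map e.symm) (fun a b => ?_) ?_
    · rw [← e.injective.eq_iff, map_mul, map_mul, e.apply_symm_apply, he, he,
        ← Pi.single_mul_left, ← Pi.single_mul_left, one_mul, one_mul, Pi.single_inj]
    · exact (Function.surjective_eval i).comp hT.2
  exact IsLocalization.flat (T' i) (Submonoid.powers (e.symm (Pi.single i 1)))

variable {δ k m : ℕ} {z : T} {A : Matrix (Fin δ) (Fin δ) T} {B : Matrix (Fin δ) (Fin k) T}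
  {C : Matrix (Fin m) (Fin δ) T} {D : Matrix (Fin m) (Fin k) T}

theorem exists_comp_eq_of_surjective_pi {f : ∀ i, T →+* T' i}
    (hf : Function.Surjective (RingHom.pi f)) {α : Type*} (g : ∀ i, α → T' i) :
    ∃ x : α → T, ∀ i, f i ∘ x = g i := by
  choose x hx using fun a => hf fun i => g i a
  exact ⟨x, fun i => funext fun a => congrFun (hx a) i⟩

theorem mem_isoCode_iff_forall_map {f : ∀ i, T →+* T' i}
    (hf : Function.Bijective (RingHom.pi f)) {v : Fin m ⊕ Fin k → T} :
    v ∈ isoCode z A B C D ↔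
      ∀ i, f i ∘ v ∈ isoCode (f i z) (A.map (f i)) (B.map (f i)) (C.map (f i)) (D.map (f i)) := by
  refine ⟨fun ⟨x, hx⟩ i => ⟨f i ∘ x, hx.map (f i)⟩, fun h => ?_⟩
  choose x hx using h
  obtain ⟨x', hx'⟩ := exists_comp_eq_of_surjective_pi hf.2 x
  refine ⟨x', IsTrajectory.of_map f hf.1 fun i => ?_⟩
  rw [hx']
  exact hx i

theorem flat_quotient_isoCode_of_bijective [Finite ι] [∀ i, Algebra T (T' i)]
    (hT : Function.Bijective (RingHom.pi fun i => algebraMap T (T' i)))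
    (hflat : ∀ i, Module.Flat (T' i) ((Fin m ⊕ Fin k → T' i) ⧸
      isoCode (algebraMap T (T' i) z) (A.map (algebraMap T (T' i))) (B.map (algebraMap T (T' i)))
        (C.map (algebraMap T (T' i))) (D.map (algebraMap T (T' i))))) :
    Module.Flat T ((Fin m ⊕ Fin k → T) ⧸ isoCode z A B C D) := by
  let code i := isoCode (algebraMap T (T' i) z) (A.map (algebraMap T (T' i)))
    (B.map (algebraMap T (T' i))) (C.map (algebraMap T (T' i))) (D.map (algebraMap T (T' i)))
  have (i : ι) : Module.Flat T (T' i) := flat_of_bijective_pi_algebraMap hT i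
  have (i : ι) : Module.Flat T ((Fin m ⊕ Fin k → T' i) ⧸ code i) := .trans T (T' i) _
  let φ : (Fin m ⊕ Fin k → T) →ₗ[T] ∀ i, (Fin m ⊕ Fin k → T' i) ⧸ code i :=
    LinearMap.pi fun i =>
      ((code i).mkQ.restrictScalars T) ∘ₗ LinearMap.compLeft (Algebra.linearMap T (T' i)) _
  have hker : LinearMap.ker φ = isoCode z A B C D := by
    ext v
    simp only [φ, LinearMap.mem_ker, LinearMap.pi_apply, LinearMap.comp_apply, funext_iff,
      LinearMap.restrictScalars_apply, Submodule.mkQ_apply, Submodule.Quotient.mk_eq_zero,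
      Pi.zero_apply, mem_isoCode_iff_forall_map hT]
    rfl
  have hsurj : Function.Surjective φ := by
    intro w
    choose g hg using fun i => Submodule.Quotient.mk_surjective _ (w i)
    obtain ⟨v, hv⟩ := exists_comp_eq_of_surjective_pi hT.2 g
    refine ⟨v, funext fun i => ?_⟩
    change Submodule.Quotient.mk (algebraMap T (T' i) ∘ v) = w i
    rw [hv, hg]
  have := Module.Flat.pi (R := T) (M := fun i => (Fin m ⊕ Fin k → T' i) ⧸ code i)
  exact .of_linearEquiv
    ((Submodule.quotEquivOfEq _ _ hker.symm).trans (φ.quotKerEquivOfSurjective hsurj))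

end Pi

theorem Polynomial.bijective_pi_mapRingHom_evalRingHom {ι : Type*} [Finite ι] (R : ι → Type*)
    [∀ i, CommRing (R i)] :
    Function.Bijective (RingHom.pi fun i => mapRingHom (Pi.evalRingHom R i)) := by
  classical
  cases nonempty_fintype ι
  refine ⟨fun p q h => ?_, fun g => ?_⟩
  · ext d i
    simpa using congrArg (coeff · d) (congrFun h i)
  · choose p hp using fun i =>
      map_surjective (Pi.evalRingHom R i) (Function.surjective_eval i) (g i)
    refine ⟨∑ i, C (Pi.single i 1) * p i, ?_⟩
    funext j
    simp only [RingHom.pi_apply, coe_mapRingHom, Polynomial.map_sum, Polynomial.map_mul, map_C]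
    rw [Finset.sum_eq_single j (fun i _ hij => by simp [Pi.single_eq_of_ne' hij]) (by simp)]
    simp [hp]

theorem code_of_ISO_observable_general {t n k δ : ℕ}
    (𝔽 : Fin t → Type*) [∀ j, Field (𝔽 j)]
    (A : Matrix (Fin δ) (Fin δ) (∀ j, 𝔽 j))
    (B : Matrix (Fin δ) (Fin k) (∀ j, 𝔽 j))
    (C : Matrix (Fin (n - k)) (Fin δ) (∀ j, 𝔽 j))
    (D : Matrix (Fin (n - k)) (Fin k) (∀ j, 𝔽 j))
    (hobs : Function.Injective (obsvMatrix A C).mulVecLin) :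
    Module.Flat (Polynomial (∀ j, 𝔽 j))
      (((Fin (n - k) ⊕ Fin k) → Polynomial (∀ j, 𝔽 j)) ⧸
        Submodule.span (Polynomial (∀ j, 𝔽 j))
          {v : (Fin (n - k) ⊕ Fin k) → Polynomial (∀ j, 𝔽 j) |
            ∃ x : Fin δ → Polynomial (∀ j, 𝔽 j),
              (Polynomial.X : Polynomial (∀ j, 𝔽 j)) • x =
                  (A.map Polynomial.C).mulVec x
                    + (B.map Polynomial.C).mulVec (fun i => v (Sum.inr i)) ∧
              (fun i => v (Sum.inl i)) =
                  (C.map Polynomial.C).mulVec x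
                    + (D.map Polynomial.C).mulVec (fun i => v (Sum.inr i))}) := by
  let 𝔠 := isoCode X (A.map Polynomial.C) (B.map Polynomial.C) (C.map Polynomial.C)
    (D.map Polynomial.C)
  suffices h : Module.Flat (∀ j, 𝔽 j)[X] ((Fin (n - k) ⊕ Fin k → (∀ j, 𝔽 j)[X]) ⧸ 𝔠) by
    rwa [← Submodule.span_eq 𝔠] at h
  obtain ⟨L, hL⟩ := Matrix.exists_mul_eq_one_of_injective hobs
  let _ (j : Fin t) : Algebra (∀ j, 𝔽 j)[X] (𝔽 j)[X] :=
    (mapRingHom (Pi.evalRingHom 𝔽 j)).toAlgebra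
  refine flat_quotient_isoCode_of_bijective (Polynomial.bijective_pi_mapRingHom_evalRingHom 𝔽)
    fun j => ?_
  refine flat_quotient_isoCode_of_mul_obsvMatrix_eq_one
    (L := (L.map Polynomial.C).map (algebraMap _ (𝔽 j)[X])) ?_
  rw [obsvMatrix_map, obsvMatrix_map, ← Matrix.map_mul, ← Matrix.map_mul, hL]
  simp

/-- Over a finite product of finite fields `R = 𝔽₁ × ⋯ × 𝔽_t`, if the I/S/O
representation `(A,B,C,D)` is reachable (`Φ_δ(A,B)` surjective) and observable
(`Ω_δ(A,C)` injective), then the family of convolutional codes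
`𝔠 = {(y(z),u(z)) | ∃ x(z), z·x(z) = A x(z) + B u(z) ∧ y(z) = C x(z) + D u(z)}`
is observable, i.e. `R[z]^n/𝔠` is a flat `R[z]`-module. -/
theorem code_of_ISO_observable {t n k δ : ℕ} (hk : k ≤ n)
    (𝔽 : Fin t → Type*) [∀ j, Field (𝔽 j)] [∀ j, Fintype (𝔽 j)]
    (A : Matrix (Fin δ) (Fin δ) (∀ j, 𝔽 j))
    (B : Matrix (Fin δ) (Fin k) (∀ j, 𝔽 j))
    (C : Matrix (Fin (n - k)) (Fin δ) (∀ j, 𝔽 j))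
    (D : Matrix (Fin (n - k)) (Fin k) (∀ j, 𝔽 j))
    (hreach : Function.Surjective (ctrbMatrix A B).mulVecLin)
    (hobs : Function.Injective (obsvMatrix A C).mulVecLin) :
    Module.Flat (Polynomial (∀ j, 𝔽 j))
      (((Fin (n - k) ⊕ Fin k) → Polynomial (∀ j, 𝔽 j)) ⧸
        Submodule.span (Polynomial (∀ j, 𝔽 j))
          {v : (Fin (n - k) ⊕ Fin k) → Polynomial (∀ j, 𝔽 j) |
            ∃ x : Fin δ → Polynomial (∀ j, 𝔽 j),
              (Polynomial.X : Polynomial (∀ j, 𝔽 j)) • x =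
                  (A.map Polynomial.C).mulVec x
                    + (B.map Polynomial.C).mulVec (fun i => v (Sum.inr i)) ∧
              (fun i => v (Sum.inl i)) =
                  (C.map Polynomial.C).mulVec x
                    + (D.map Polynomial.C).mulVec (fun i => v (Sum.inr i))}) :=
  code_of_ISO_observable_general 𝔽 A B C D hobs
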